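/- arXiv:2503.24112 — 3 statements merged into one kernel-verified Lean document; each statement's English description precedes it below -/
import Mathlib

section
/- Let T ⊆ SL_n(ℝ) be a maximal algebraic torus stabilizing a homogeneous form φ of degree n that splits over ℝ as a product of n linearly independent linear forms, and suppose ℝ^n decomposes T-equivariantly as V₁ ⊕ ⋯ ⊕ V_r with each Vᵢ identified with a field extension Rᵢ/ℝ and φ(w) = ∏ᵢ N_{Rᵢ/ℝ}(wᵢ) (after scaling). If φ(w) = 0 for some w ∈ ℝ^n, then for every ε > 0 there exists t in the maximal ℝ-split subtorus T_s of T with ‖t·w‖ < ε. -/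
open scoped BigOperators

/-- Lemma 4.2(ii) over `ℝ`: if `ℝ^n ≅ R₁ ⊕ ⋯ ⊕ R_r` with each `Rᵢ` a finite field
extension of `ℝ` and `φ(w) = ∏ᵢ N_{Rᵢ/ℝ}(wᵢ)`, and `φ(w) = 0`, then the split part
of the stabilizing torus (acting by homotheties `tᵢ` on each factor, with
`∏ tᵢ^{dim Rᵢ} = 1`, i.e. determinant one) moves `w` arbitrarily close to `0`. -/
theorem stmt5 (r : ℕ) (R : Fin r → Type*) [∀ i, NormedField (R i)]
    [∀ i, NormedAlgebra ℝ (R i)] [∀ i, FiniteDimensional ℝ (R i)]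
    (n : ℕ) (hn : n = ∑ i, Module.finrank ℝ (R i))
    (w : ∀ i, R i) (hw : ∏ i, Algebra.norm ℝ (w i) = 0) :
    ∀ ε > 0, ∃ t : Fin r → ℝ, (∀ i, 0 < t i) ∧
      (∏ i, t i ^ (Module.finrank ℝ (R i))) = 1 ∧
      ‖(fun i => t i • w i : ∀ i, R i)‖ < ε := by
  intro ε hε
  obtain ⟨i₀, -, h0⟩ := Finset.prod_eq_zero_iff.mp hw
  rw [Algebra.norm_eq_zero_iff] at h0
  set B := ‖w‖ with hBdef
  have hB : 0 ≤ B := norm_nonneg w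
  set c : ℝ := min 1 (ε / (1 + B)) with hc
  have hc0 : 0 < c := lt_min one_pos (div_pos hε (by linarith))
  have hcB : c * B < ε := by
    calc c * B ≤ (ε / (1 + B)) * B :=
          mul_le_mul_of_nonneg_right (min_le_right _ _) hB
      _ < ε := by
          rw [div_mul_eq_mul_div, div_lt_iff₀ (by linarith)]
          nlinarith
  set m : ℕ := ∑ i ∈ Finset.univ.erase i₀, Module.finrank ℝ (R i) with hm
  have hdpos : 0 < Module.finrank ℝ (R i₀) := Module.finrank_pos
  have hd0 : (Module.finrank ℝ (R i₀) : ℝ) ≠ 0 := by exact_mod_cast hdpos.ne'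
  refine ⟨fun i => if i = i₀ then c ^ (-(m : ℝ) / (Module.finrank ℝ (R i₀) : ℝ)) else c,
    ?_, ?_, ?_⟩
  · intro i
    dsimp only
    split
    · exact Real.rpow_pos_of_pos hc0 _
    · exact hc0
  · rw [← Finset.mul_prod_erase Finset.univ _ (Finset.mem_univ i₀)]
    have h1 : ∏ i ∈ Finset.univ.erase i₀,
        (if i = i₀ then c ^ (-(m : ℝ) / (Module.finrank ℝ (R i₀) : ℝ)) else c)
          ^ Module.finrank ℝ (R i) = c ^ m := by
      rw [hm, ← Finset.prod_pow_eq_pow_sum]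
      exact Finset.prod_congr rfl fun i hi => by
        rw [if_neg (Finset.ne_of_mem_erase hi)]
    dsimp only
    rw [h1, if_pos rfl, ← Real.rpow_natCast (c ^ (-(m : ℝ) / _)) _,
      ← Real.rpow_mul hc0.le, div_mul_cancel₀ _ hd0, ← Real.rpow_natCast c m,
      ← Real.rpow_add hc0]
    simp
  · rw [pi_norm_lt_iff hε]
    intro i
    dsimp only
    split_ifs with h
    · subst h
      rw [h0, smul_zero, norm_zero]
      exact hε
    · rw [norm_smul, Real.norm_of_nonneg hc0.le]
      calc c * ‖w i‖ ≤ c * B := by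
            exact mul_le_mul_of_nonneg_left (norm_le_pi_norm w i) hc0.le
        _ < ε := hcB
end

section
/- Let f be a homogeneous polynomial on ℝ^n and H a closed subgroup of SL_n(ℝ) with f(hx) = f(x) for all h ∈ H, such that H·π(e) is compact in SL_n(ℝ)/SL_n(ℤ). Suppose that for every w ∈ ℝ^n with f(w) = 0 and every ε > 0 there exists t ∈ H with ‖tw‖ < ε. Then f(z) ≠ 0 for every z ∈ ℤ^n \ {0}. -/
/-!
Let `C ⊆ SL_n(ℝ)` be compact with `H ⊆ C · SL_n(ℤ)`, which exists because `H · π(e)` is compact.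
If `f(z) = 0` for some nonzero `z ∈ ℤ^n`, then some `t = k γ ∈ H` with `k ∈ C`, `γ ∈ SL_n(ℤ)`
makes `t z` arbitrarily small. But `γ z` is a nonzero integer vector, so `‖γ z‖ ≥ 1`, and `k⁻¹`
ranges over a compact set of matrices, so `‖t z‖ ≥ ‖γ z‖ / B ≥ 1 / B` for a uniform bound `B`.
-/

open MvPolynomial

/-- Topology on `SL_n(ℝ)` induced from the space of matrices. -/
instance SLtop (n : ℕ) : TopologicalSpace (Matrix.SpecialLinearGroup (Fin n) ℝ) :=
  instTopologicalSpaceSubtype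

open Matrix (SpecialLinearGroup)

open scoped Matrix

instance Matrix.instLocallyCompactSpace {m n R : Type*} [Finite m] [Finite n] [TopologicalSpace R]
    [LocallyCompactSpace R] : LocallyCompactSpace (Matrix m n R) :=
  inferInstanceAs (LocallyCompactSpace (m → n → R))

instance SLtop_isTopologicalGroup (n : ℕ) : IsTopologicalGroup (SpecialLinearGroup (Fin n) ℝ) :=
  Matrix.SpecialLinearGroup.topologicalGroup

instance SLtop_locallyCompactSpace (n : ℕ) : LocallyCompactSpace (SpecialLinearGroup (Fin n) ℝ) :=
  Matrix.SpecialLinearGroup.isClosedEmbedding_val.locallyCompactSpace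

theorem IsCompact.exists_isCompact_subset_image_of_isOpenMap {X Y : Type*} [TopologicalSpace X]
    [TopologicalSpace Y] [WeaklyLocallyCompactSpace X] {f : X → Y} (hf : IsOpenMap f)
    (hsurj : Function.Surjective f) {K : Set Y} (hK : IsCompact K) :
    ∃ C : Set X, IsCompact C ∧ K ⊆ f '' C := by
  have hnhds : ∀ y : Y, ∃ N : Set X, IsCompact N ∧ f '' N ∈ nhds y := by
    intro y
    obtain ⟨x, rfl⟩ := hsurj y
    obtain ⟨N, hNc, hNx⟩ := exists_compact_mem_nhds x
    exact ⟨N, hNc, hf.image_mem_nhds hNx⟩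
  choose N hNc hNy using hnhds
  obtain ⟨t, -, hKt⟩ := hK.elim_nhds_subcover (fun y => f '' N y) fun y _ => hNy y
  refine ⟨⋃ y ∈ t, N y, t.isCompact_biUnion fun y _ => hNc y, ?_⟩
  simpa only [Set.image_iUnion] using hKt

section LinftyOpNorm

attribute [local instance] Matrix.linftyOpNormedAddCommGroup

theorem IsCompact.exists_pos_norm_mulVec_le {m n : Type*} [Fintype m] [Fintype n]
    {K : Set (Matrix m n ℝ)} (hK : IsCompact K) :
    ∃ B > 0, ∀ A ∈ K, ∀ x : n → ℝ, ‖A *ᵥ x‖ ≤ B * ‖x‖ := by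
  obtain ⟨B, hB, hKB⟩ := hK.isBounded.exists_pos_norm_le
  exact ⟨B, hB, fun A hA x => (Matrix.linfty_opNorm_mulVec A x).trans
    (mul_le_mul_of_nonneg_right (hKB A hA) (norm_nonneg x))⟩

end LinftyOpNorm

theorem one_le_norm_intCast {ι : Type*} [Fintype ι] {z : ι → ℤ} (hz : z ≠ 0) :
    1 ≤ ‖fun i => (z i : ℝ)‖ := by
  obtain ⟨i, hi⟩ := Function.ne_iff.mp hz
  calc (1 : ℝ) ≤ |(z i : ℝ)| := by exact_mod_cast Int.one_le_abs hi
    _ ≤ ‖fun i => (z i : ℝ)‖ := norm_le_pi_norm (fun i => (z i : ℝ)) i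

theorem Matrix.SpecialLinearGroup.map_intCast_mulVec {n : ℕ} (γ : SpecialLinearGroup (Fin n) ℤ)
    (z : Fin n → ℤ) :
    (SpecialLinearGroup.map (Int.castRingHom ℝ) γ : Matrix (Fin n) (Fin n) ℝ) *ᵥ
      (fun i => (z i : ℝ)) = fun i => (((γ : Matrix (Fin n) (Fin n) ℤ) *ᵥ z) i : ℝ) := by
  funext i
  exact ((Int.castRingHom ℝ).map_mulVec (γ : Matrix (Fin n) (Fin n) ℤ) z i).symm

theorem Matrix.SpecialLinearGroup.mulVec_ne_zero {ι R : Type*} [Fintype ι] [DecidableEq ι]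
    [CommRing R] [NoZeroDivisors R] [Nontrivial R] (γ : SpecialLinearGroup ι R) {z : ι → R}
    (hz : z ≠ 0) : (γ : Matrix ι ι R) *ᵥ z ≠ 0 :=
  fun h => hz (Matrix.eq_zero_of_mulVec_eq_zero (by simp) h)

theorem IsCompact.exists_pos_le_norm_mul_map_mulVec_intCast {n : ℕ}
    {C : Set (SpecialLinearGroup (Fin n) ℝ)} (hC : IsCompact C) :
    ∃ ε > 0, ∀ k ∈ C, ∀ γ : SpecialLinearGroup (Fin n) ℤ, ∀ z : Fin n → ℤ, z ≠ 0 →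
      ε ≤ ‖((k * SpecialLinearGroup.map (Int.castRingHom ℝ) γ : SpecialLinearGroup (Fin n) ℝ) :
        Matrix (Fin n) (Fin n) ℝ) *ᵥ fun i => (z i : ℝ)‖ := by
  have hCinv : IsCompact ((fun k : SpecialLinearGroup (Fin n) ℝ =>
      ((k⁻¹ : SpecialLinearGroup (Fin n) ℝ) : Matrix (Fin n) (Fin n) ℝ)) '' C) :=
    hC.image (continuous_subtype_val.comp continuous_inv)
  obtain ⟨B, hB, hBound⟩ := hCinv.exists_pos_norm_mulVec_le
  refine ⟨B⁻¹, inv_pos.mpr hB, fun k hk γ z hz => ?_⟩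
  set y := ((k * SpecialLinearGroup.map (Int.castRingHom ℝ) γ : SpecialLinearGroup (Fin n) ℝ) :
    Matrix (Fin n) (Fin n) ℝ) *ᵥ fun i => (z i : ℝ)
  have hky : ((k⁻¹ : SpecialLinearGroup (Fin n) ℝ) : Matrix (Fin n) (Fin n) ℝ) *ᵥ y =
      fun i => (((γ : Matrix (Fin n) (Fin n) ℤ) *ᵥ z) i : ℝ) := by
    rw [Matrix.mulVec_mulVec, ← Matrix.SpecialLinearGroup.coe_mul, inv_mul_cancel_left,
      Matrix.SpecialLinearGroup.map_intCast_mulVec]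
  have h1 : 1 ≤ B * ‖y‖ :=
    calc 1 ≤ ‖fun i => (((γ : Matrix (Fin n) (Fin n) ℤ) *ᵥ z) i : ℝ)‖ :=
          one_le_norm_intCast (Matrix.SpecialLinearGroup.mulVec_ne_zero γ hz)
      _ ≤ B * ‖y‖ := hky ▸ hBound _ ⟨k, hk, rfl⟩ y
  rwa [inv_le_iff_one_le_mul₀ hB, mul_comm]

theorem stmt11_general (n : ℕ) (f : MvPolynomial (Fin n) ℝ)
    (Γ H : Subgroup (Matrix.SpecialLinearGroup (Fin n) ℝ))
    (hΓ : Γ = (Matrix.SpecialLinearGroup.map (Int.castRingHom ℝ)).range)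
    (horb : IsCompact ((QuotientGroup.mk : Matrix.SpecialLinearGroup (Fin n) ℝ →
      Matrix.SpecialLinearGroup (Fin n) ℝ ⧸ Γ) '' (H : Set _)))
    (hcontract : ∀ w : Fin n → ℝ, eval w f = 0 → ∀ ε > 0, ∃ t ∈ H,
      ‖Matrix.mulVec (t : Matrix (Fin n) (Fin n) ℝ) w‖ < ε) :
    ∀ z : Fin n → ℤ, z ≠ 0 → eval (fun i => (z i : ℝ)) f ≠ 0 := by
  subst hΓ
  intro z hz hfz
  obtain ⟨C, hC, hHC⟩ := horb.exists_isCompact_subset_image_of_isOpenMap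
    QuotientGroup.isOpenMap_coe QuotientGroup.mk_surjective
  obtain ⟨ε, hε, hbound⟩ := hC.exists_pos_le_norm_mul_map_mulVec_intCast
  obtain ⟨t, ht, hsmall⟩ := hcontract _ hfz ε hε
  obtain ⟨k, hk, hkt⟩ := hHC ⟨t, ht, rfl⟩
  obtain ⟨γ, hγ⟩ := QuotientGroup.eq.mp hkt
  have htkγ : t = k * Matrix.SpecialLinearGroup.map (Int.castRingHom ℝ) γ := by
    rw [hγ, mul_inv_cancel_left]
  exact (hbound k hk γ z hz).not_gt (htkγ ▸ hsmall)

/-- If `f` is an `H`-invariant homogeneous polynomial, `H` a closed subgroup of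
`SL_n(ℝ)` with compact orbit `H·π(e)` in `SL_n(ℝ)/SL_n(ℤ)`, and the zero set of
`f` is contracted into `0` by `H`, then `f` does not vanish on `ℤ^n \ {0}`. -/
theorem stmt11 (n : ℕ) (f : MvPolynomial (Fin n) ℝ) (hfhom : f.IsHomogeneous n)
    (Γ H : Subgroup (Matrix.SpecialLinearGroup (Fin n) ℝ))
    (hΓ : Γ = (Matrix.SpecialLinearGroup.map (Int.castRingHom ℝ)).range)
    (hH : IsClosed (H : Set (Matrix.SpecialLinearGroup (Fin n) ℝ)))
    (hinv : ∀ h ∈ H, ∀ x : Fin n → ℝ,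
      eval (Matrix.mulVec (h : Matrix (Fin n) (Fin n) ℝ) x) f = eval x f)
    (horb : IsCompact ((QuotientGroup.mk : Matrix.SpecialLinearGroup (Fin n) ℝ →
      Matrix.SpecialLinearGroup (Fin n) ℝ ⧸ Γ) '' (H : Set _)))
    (hcontract : ∀ w : Fin n → ℝ, eval w f = 0 → ∀ ε > 0, ∃ t ∈ H,
      ‖Matrix.mulVec (t : Matrix (Fin n) (Fin n) ℝ) w‖ < ε) :
    ∀ z : Fin n → ℤ, z ≠ 0 → eval (fun i => (z i : ℝ)) f ≠ 0 :=
  stmt11_general n f Γ H hΓ horb hcontract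
end

section
/- Let f be an H-invariant continuous function on ℝ^n where H is a closed subgroup of SL_n(ℝ) with H·π(e) compact in SL_n(ℝ)/SL_n(ℤ). Suppose for every w with f(w) ≠ 0 there exist k > 1 and t ∈ H with (1/k)|f(w)|^{1/n} ≤ ‖tw‖ ≤ k|f(w)|^{1/n} (k independent of w). Then f(ℤ^n) is discrete in ℝ. -/
open Set Filter Topology Bornology Metric Matrix MulAction Pointwise

theorem IsOpenMap.exists_isCompact_subset_image {X Y : Type*} [TopologicalSpace X]
    [TopologicalSpace Y] [WeaklyLocallyCompactSpace X] {f : X → Y} (hf : IsOpenMap f)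
    {s : Set Y} (hs : IsCompact s) (hsf : s ⊆ range f) : ∃ K, IsCompact K ∧ s ⊆ f '' K := by
  choose x hx using hsf
  choose V hV hVx using fun y (hy : y ∈ s) => exists_compact_mem_nhds (x hy)
  obtain ⟨t, ht⟩ := hs.elim_nhds_subcover' (fun y hy => f '' V y hy)
    fun y hy => by simpa only [hx hy] using hf.image_mem_nhds (hVx y hy)
  refine ⟨⋃ y ∈ t, V y y.2, t.isCompact_biUnion fun y _ => hV y y.2, ?_⟩
  rwa [image_iUnion₂]

theorem exists_isCompact_subset_mul_of_isCompact_image_mk {G : Type*} [Group G]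
    [TopologicalSpace G] [IsTopologicalGroup G] [LocallyCompactSpace G] [SigmaCompactSpace G]
    {Γ H : Subgroup G} (hΓ : IsClosed (Γ : Set G)) (hH : IsClosed (H : Set G))
    (horb : IsCompact ((QuotientGroup.mk : G → G ⧸ Γ) '' H)) :
    ∃ K ⊆ (H : Set G), IsCompact K ∧ (H : Set G) ⊆ K * Γ := by
  have : LocallyCompactSpace H := hH.locallyCompactSpace
  have : SigmaCompactSpace H := hH.sigmaCompactSpace
  set x₀ : G ⧸ Γ := QuotientGroup.mk 1
  have smul_x₀ (h : H) : h • x₀ = ((h : G) : G ⧸ Γ) := congrArg _ (mul_one (h : G))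
  have horbit : orbit H x₀ = QuotientGroup.mk '' H := by
    ext y
    constructor
    · rintro ⟨h, rfl⟩
      exact ⟨h, h.2, (smul_x₀ h).symm⟩
    · rintro ⟨g, hg, rfl⟩
      exact ⟨⟨g, hg⟩, smul_x₀ _⟩
  -- `hΓ`, as a local instance, makes `G ⧸ Γ` Hausdorff; so the compact orbit is a Baire space.
  have : CompactSpace (orbit H x₀) := isCompact_iff_compactSpace.mp (horbit ▸ horb)
  have : ContinuousSMul H (orbit H x₀) := ⟨continuous_induced_rng.2 <|
    (continuous_subtype_val.comp continuous_fst).smul (continuous_subtype_val.comp continuous_snd)⟩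
  let b : orbit H x₀ := ⟨x₀, mem_orbit_self x₀⟩
  have hopen : IsOpenMap fun h : H => h • b := isOpenMap_smul_of_sigmaCompact b
  obtain ⟨K, hK, hcover⟩ :=
    hopen.exists_isCompact_subset_image isCompact_univ fun y _ => exists_smul_eq H b y
  refine ⟨(↑) '' K, Subtype.coe_image_subset _ _, hK.image continuous_subtype_val,
    fun t ht => ?_⟩
  obtain ⟨τ, hτK, hτt⟩ := hcover (mem_univ ((⟨t, ht⟩ : H) • b))
  have hτt : (τ : G ⧸ Γ) = t := by
    rw [← smul_x₀, ← smul_x₀ ⟨t, ht⟩]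
    exact congrArg Subtype.val hτt
  exact mem_mul.2 ⟨τ, mem_image_of_mem _ hτK, (τ : G)⁻¹ * t, QuotientGroup.eq.mp hτt,
    mul_inv_cancel_left _ _⟩

theorem discreteTopology_of_forall_exists_finite_inter {X : Type*} [TopologicalSpace X]
    [T1Space X] {s : Set X} (h : ∀ x ∈ s, ∃ U ∈ 𝓝 x, (U ∩ s).Finite) : DiscreteTopology s := by
  refine discreteTopology_subtype_iff.2 fun x hx => ?_
  obtain ⟨U, hU, hfin⟩ := h x hx
  have hV : ((U ∩ s) \ {x})ᶜ ∈ 𝓝 x := hfin.sdiff.isClosed.isOpen_compl.mem_nhds fun h => h.2 rfl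
  rw [inf_principal_eq_bot, mem_nhdsWithin_iff_exists_mem_nhds_inter]
  exact ⟨U ∩ ((U ∩ s) \ {x})ᶜ, inter_mem hU hV,
    fun y ⟨⟨hyU, hy⟩, hyx⟩ hys => hy ⟨⟨hyU, hys⟩, hyx⟩⟩

theorem finite_setOf_intCast_mem {ι : Type*} [Fintype ι] {s : Set (ι → ℝ)} (hs : IsBounded s) :
    {z : ι → ℤ | (fun i => (z i : ℝ)) ∈ s}.Finite := by
  have e : IsClosedEmbedding fun (z : ι → ℤ) i => (z i : ℝ) :=
    IsClosedEmbedding.piMap fun _ => Int.isClosedEmbedding_coe_real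
  exact (e.isCompact_preimage hs.isCompact_closure).finite_of_discrete.subset
    fun z hz => subset_closure (s := s) hz

theorem isBounded_image2_mulVec {m n : Type*} [Fintype m] [Fintype n]
    {K : Set (Matrix m n ℝ)} (hK : IsCompact K) {s : Set (n → ℝ)} (hs : IsBounded s) :
    IsBounded (image2 (· *ᵥ ·) K s) := by
  refine ((hK.prod hs.isCompact_closure).image (f := fun p => p.1 *ᵥ p.2)
    (by fun_prop)).isBounded.subset ?_
  rw [image_prod]
  exact image2_subset_left subset_closure

namespace Matrix.SpecialLinearGroup

instance (n : ℕ) : IsTopologicalGroup (SpecialLinearGroup (Fin n) ℝ) := topologicalGroup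

instance (n : ℕ) : LocallyCompactSpace (SpecialLinearGroup (Fin n) ℝ) :=
  have : LocallyCompactSpace (Matrix (Fin n) (Fin n) ℝ) :=
    inferInstanceAs (LocallyCompactSpace (Fin n → Fin n → ℝ))
  isClosedEmbedding_val.locallyCompactSpace

instance (n : ℕ) : SigmaCompactSpace (SpecialLinearGroup (Fin n) ℝ) :=
  have : SigmaCompactSpace (Matrix (Fin n) (Fin n) ℝ) :=
    inferInstanceAs (SigmaCompactSpace (Fin n → Fin n → ℝ))
  isClosedEmbedding_val.sigmaCompactSpace

theorem isClosed_range_map_intCast (n : ℕ) :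
    IsClosed (((map (Int.castRingHom ℝ)).range : Subgroup (SpecialLinearGroup (Fin n) ℝ)) :
      Set (SpecialLinearGroup (Fin n) ℝ)) := by
  rw [MonoidHom.coe_range]
  exact Int.isClosedEmbedding_coe_real.specialLinearGroup_map.isClosed_range

theorem exists_intCast_eq_mulVec {ι : Type*} [Fintype ι] [DecidableEq ι]
    {g : SpecialLinearGroup ι ℝ} (hg : g ∈ (map (Int.castRingHom ℝ)).range) (z : ι → ℤ) :
    ∃ z' : ι → ℤ, (fun i => (z' i : ℝ)) = (g : Matrix ι ι ℝ) *ᵥ fun i => (z i : ℝ) := by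
  obtain ⟨D, rfl⟩ := hg
  exact ⟨(D : Matrix ι ι ℤ) *ᵥ z, by ext i; simp [mulVec, dotProduct]⟩

end Matrix.SpecialLinearGroup

theorem finite_image_intCast_of_forall_exists_norm_mulVec_le {n : ℕ}
    {f : (Fin n → ℝ) → ℝ} {H : Subgroup (Matrix.SpecialLinearGroup (Fin n) ℝ)}
    (hinv : ∀ h ∈ H, ∀ x : Fin n → ℝ, f ((h : Matrix (Fin n) (Fin n) ℝ) *ᵥ x) = f x)
    {Γ : Subgroup (Matrix.SpecialLinearGroup (Fin n) ℝ)}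
    (hΓ : Γ ≤ (Matrix.SpecialLinearGroup.map (Int.castRingHom ℝ)).range)
    {K : Set (Matrix.SpecialLinearGroup (Fin n) ℝ)} (hKH : K ⊆ H) (hK : IsCompact K)
    (hHK : (H : Set (Matrix.SpecialLinearGroup (Fin n) ℝ)) ⊆ K * Γ)
    {s : Set (Fin n → ℤ)} {M : ℝ}
    (hs : ∀ z ∈ s, ∃ t ∈ H, ‖(t : Matrix (Fin n) (Fin n) ℝ) *ᵥ fun i => (z i : ℝ)‖ ≤ M) :
    ((fun z : Fin n → ℤ => f fun i => (z i : ℝ)) '' s).Finite := by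
  have hKinv : IsCompact ((fun τ => ((τ⁻¹ : Matrix.SpecialLinearGroup (Fin n) ℝ) :
      Matrix (Fin n) (Fin n) ℝ)) '' K) := hK.image (by fun_prop)
  refine ((finite_setOf_intCast_mem
    (isBounded_image2_mulVec hKinv (isBounded_closedBall (x := 0) (r := M)))).image
    (fun z : Fin n → ℤ => f fun i => (z i : ℝ))).subset ?_
  rintro _ ⟨z, hz, rfl⟩
  obtain ⟨t, ht, htM⟩ := hs z hz
  obtain ⟨τ, hτ, δ, hδ, rfl⟩ := mem_mul.1 (hHK ht)
  have hδH : δ ∈ H := by simpa using H.mul_mem (H.inv_mem (hKH hτ)) ht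
  obtain ⟨z', hz'⟩ := Matrix.SpecialLinearGroup.exists_intCast_eq_mulVec (hΓ hδ) z
  refine ⟨z', ?_, by simp only [hz', hinv δ hδH]⟩
  have hz'τ : (fun i => (z' i : ℝ)) = ((τ⁻¹ : Matrix.SpecialLinearGroup (Fin n) ℝ) :
      Matrix (Fin n) (Fin n) ℝ) *ᵥ ((τ * δ : Matrix.SpecialLinearGroup (Fin n) ℝ) :
      Matrix (Fin n) (Fin n) ℝ) *ᵥ fun i => (z i : ℝ) := by
    rw [hz', mulVec_mulVec, ← Matrix.SpecialLinearGroup.coe_mul, inv_mul_cancel_left]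
  rw [mem_ofPred_eq, hz'τ]
  exact mem_image2_of_mem ⟨τ, hτ, rfl⟩ (mem_closedBall_zero_iff.2 htM)

theorem stmt13_general (n : ℕ) (f : (Fin n → ℝ) → ℝ)
    (Γ H : Subgroup (Matrix.SpecialLinearGroup (Fin n) ℝ))
    (hΓ : Γ = (Matrix.SpecialLinearGroup.map (Int.castRingHom ℝ)).range)
    (hH : IsClosed (H : Set (Matrix.SpecialLinearGroup (Fin n) ℝ)))
    (hinv : ∀ h ∈ H, ∀ x : Fin n → ℝ,
      f (Matrix.mulVec (h : Matrix (Fin n) (Fin n) ℝ) x) = f x)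
    (horb : IsCompact ((QuotientGroup.mk : Matrix.SpecialLinearGroup (Fin n) ℝ →
      Matrix.SpecialLinearGroup (Fin n) ℝ ⧸ Γ) '' (H : Set _)))
    (hcomp : ∃ k : ℝ, 1 < k ∧ ∀ w : Fin n → ℝ, f w ≠ 0 → ∃ t ∈ H,
      (1 / k) * |f w| ^ ((n : ℝ)⁻¹) ≤
        ‖Matrix.mulVec (t : Matrix (Fin n) (Fin n) ℝ) w‖ ∧
      ‖Matrix.mulVec (t : Matrix (Fin n) (Fin n) ℝ) w‖ ≤ k * |f w| ^ ((n : ℝ)⁻¹)) :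
    DiscreteTopology {y : ℝ | ∃ z : Fin n → ℤ, f (fun i => (z i : ℝ)) = y} := by
  obtain ⟨k, hk, hmove⟩ := hcomp
  obtain ⟨K, hKH, hK, hHK⟩ := exists_isCompact_subset_mul_of_isCompact_image_mk
    (hΓ ▸ Matrix.SpecialLinearGroup.isClosed_range_map_intCast n) hH horb
  refine discreteTopology_of_forall_exists_finite_inter fun y _ =>
    ⟨closedBall y 1, closedBall_mem_nhds y one_pos, ?_⟩
  set s := {z : Fin n → ℤ | f (fun i => (z i : ℝ)) ≠ 0 ∧ |f (fun i => (z i : ℝ))| ≤ |y| + 1}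
  have hs : ∀ z ∈ s, ∃ t ∈ H, ‖(t : Matrix (Fin n) (Fin n) ℝ) *ᵥ fun i => (z i : ℝ)‖ ≤
      k * (|y| + 1) ^ (n : ℝ)⁻¹ := by
    rintro z ⟨hz0, hzy⟩
    obtain ⟨t, ht, -, hle⟩ := hmove _ hz0
    exact ⟨t, ht, hle.trans (by gcongr)⟩
  have hfin := finite_image_intCast_of_forall_exists_norm_mulVec_le hinv hΓ.le hKH hK hHK hs
  refine (hfin.insert 0).subset ?_
  rintro _ ⟨hxy, z, rfl⟩
  by_cases h0 : f (fun i => (z i : ℝ)) = 0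
  · exact Or.inl h0
  · refine Or.inr ⟨z, ⟨h0, ?_⟩, rfl⟩
    rw [mem_closedBall, Real.dist_eq] at hxy
    linarith [abs_sub_abs_le_abs_sub (f fun i => (z i : ℝ)) y]

/-- Discreteness part of Proposition 4.1: if `f` is an `H`-invariant continuous
function, `H·π(e)` is compact, and every `w` with `f(w) ≠ 0` can be moved by `H`
to a vector of norm comparable to `|f(w)|^{1/n}` (uniformly in `w`), then
`f(ℤ^n)` is discrete in `ℝ`. -/
theorem stmt13 (n : ℕ) (f : (Fin n → ℝ) → ℝ) (hfc : Continuous f)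
    (Γ H : Subgroup (Matrix.SpecialLinearGroup (Fin n) ℝ))
    (hΓ : Γ = (Matrix.SpecialLinearGroup.map (Int.castRingHom ℝ)).range)
    (hH : IsClosed (H : Set (Matrix.SpecialLinearGroup (Fin n) ℝ)))
    (hinv : ∀ h ∈ H, ∀ x : Fin n → ℝ,
      f (Matrix.mulVec (h : Matrix (Fin n) (Fin n) ℝ) x) = f x)
    (horb : IsCompact ((QuotientGroup.mk : Matrix.SpecialLinearGroup (Fin n) ℝ →
      Matrix.SpecialLinearGroup (Fin n) ℝ ⧸ Γ) '' (H : Set _)))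
    (hcomp : ∃ k : ℝ, 1 < k ∧ ∀ w : Fin n → ℝ, f w ≠ 0 → ∃ t ∈ H,
      (1 / k) * |f w| ^ ((n : ℝ)⁻¹) ≤
        ‖Matrix.mulVec (t : Matrix (Fin n) (Fin n) ℝ) w‖ ∧
      ‖Matrix.mulVec (t : Matrix (Fin n) (Fin n) ℝ) w‖ ≤ k * |f w| ^ ((n : ℝ)⁻¹)) :
    DiscreteTopology {y : ℝ | ∃ z : Fin n → ℤ, f (fun i => (z i : ℝ)) = y} :=
  stmt13_general n f Γ H hΓ hH hinv horb hcomp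
end
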